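/- arXiv:0709.4133 — 3 statements merged into one kernel-verified Lean document; each statement's English description precedes it below -/
import Mathlib

section
/- Let s ∈ ℝ satisfy 8s⁸ ∉ Λ(s). If A ⊆ ℝ² is a set whose distance set satisfies Δ(A) ⊆ {n + s : n ∈ ℕ}, then A has at most 3 elements. -/
/-!
Four points of a plane span a degenerate tetrahedron, so their Cayley–Menger determinant
vanishes. If all six distances have the form `nᵢⱼ + s` with `nᵢⱼ ∈ ℤ`, this relation reads
`2s⁶ + p(s) = 0` for the halved determinant, where `p ∈ ℤ[X]` has degree at most `5`; hence
`8s⁸ = -4s²p(s)`, and every element of `4s²ℤ[s]` of degree at most `7` lies in `Λ(s)`.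
So when `8s⁸ ∉ Λ(s)`, the set `A` contains no four distinct points.
-/

/-- The set `Λ(s) = ℤ + 4sℤ + 2s²ℤ + 4s³ℤ + s⁴ℤ + 2s⁵ℤ + 2s⁶ℤ + 4s⁷ℤ`. -/
def Lambda (s : ℝ) : Set ℝ :=
  {x | ∃ n₀ n₁ n₂ n₃ n₄ n₅ n₆ n₇ : ℤ,
    x = (n₀ : ℝ) + 4 * n₁ * s + 2 * n₂ * s ^ 2 + 4 * n₃ * s ^ 3 + n₄ * s ^ 4
      + 2 * n₅ * s ^ 5 + 2 * n₆ * s ^ 6 + 4 * n₇ * s ^ 7}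

open Polynomial

/-- Half the Cayley–Menger determinant of four points with squared mutual distances `dᵢⱼ`. -/
def cayleyMenger {R : Type*} [CommRing R] (d₁₂ d₁₃ d₁₄ d₂₃ d₂₄ d₃₄ : R) : R :=
  4 * d₁₄ * d₂₄ * d₃₄ + (d₁₄ + d₂₄ - d₁₂) * (d₁₄ + d₃₄ - d₁₃) * (d₂₄ + d₃₄ - d₂₃)
    - d₁₄ * (d₂₄ + d₃₄ - d₂₃) ^ 2 - d₂₄ * (d₁₄ + d₃₄ - d₁₃) ^ 2 - d₃₄ * (d₁₄ + d₂₄ - d₁₂) ^ 2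

section InnerProductSpace

variable {E : Type*} [NormedAddCommGroup E] [InnerProductSpace ℝ E]

theorem cayleyMenger_norm_sq_eq_four_mul_det_gram (u v w : E) :
    cayleyMenger (‖u - v‖ ^ 2) (‖u - w‖ ^ 2) (‖u‖ ^ 2) (‖v - w‖ ^ 2) (‖v‖ ^ 2) (‖w‖ ^ 2) =
      4 * (Matrix.gram ℝ ![u, v, w]).det := by
  simp only [cayleyMenger, norm_sub_sq_real, Matrix.det_fin_three, Matrix.gram_apply,
    Matrix.cons_val_zero, Matrix.cons_val_one, Matrix.cons_val, real_inner_self_eq_norm_sq,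
    real_inner_comm u v, real_inner_comm u w, real_inner_comm v w]
  ring

theorem cayleyMenger_dist_sq_eq_zero [FiniteDimensional ℝ E]
    (hE : Module.finrank ℝ E ≤ 2) (p₁ p₂ p₃ p₄ : E) :
    cayleyMenger (dist p₁ p₂ ^ 2) (dist p₁ p₃ ^ 2) (dist p₁ p₄ ^ 2) (dist p₂ p₃ ^ 2)
      (dist p₂ p₄ ^ 2) (dist p₃ p₄ ^ 2) = 0 := by
  have h_det : (Matrix.gram ℝ ![p₁ - p₄, p₂ - p₄, p₃ - p₄]).det = 0 := by
    by_contra h_ne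
    have h_indep := Matrix.det_gram_ne_zero_iff_linearIndependent.mp h_ne
    simpa using h_indep.fintype_card_le_finrank.trans hE
  simp only [dist_eq_norm, ← sub_sub_sub_cancel_right p₁ p₂ p₄,
    ← sub_sub_sub_cancel_right p₁ p₃ p₄, ← sub_sub_sub_cancel_right p₂ p₃ p₄]
  rw [cayleyMenger_norm_sq_eq_four_mul_det_gram, h_det, mul_zero]

end InnerProductSpace

theorem map_cayleyMenger {R S : Type*} [CommRing R] [CommRing S] (f : R →+* S)
    (d₁₂ d₁₃ d₁₄ d₂₃ d₂₄ d₃₄ : R) :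
    f (cayleyMenger d₁₂ d₁₃ d₁₄ d₂₃ d₂₄ d₃₄) =
      cayleyMenger (f d₁₂) (f d₁₃) (f d₁₄) (f d₂₃) (f d₂₄) (f d₃₄) := by
  simp [cayleyMenger, map_ofNat]

set_option maxRecDepth 10000 in
/-- The `X ^ 6` coefficients cancel because `cayleyMenger 1 1 1 1 1 1 = 2`. -/
theorem natDegree_cayleyMenger_shift_sub_le {R : Type*} [CommRing R] (a b c d e f : R) :
    (cayleyMenger ((C a + X) ^ 2) ((C b + X) ^ 2) ((C c + X) ^ 2) ((C d + X) ^ 2)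
      ((C e + X) ^ 2) ((C f + X) ^ 2) - 2 * X ^ 6).natDegree ≤ 5 := by
  unfold cayleyMenger
  ring_nf
  compute_degree

theorem four_mul_sq_mul_aeval_mem_Lambda (s : ℝ) {p : ℤ[X]} (hp : p.natDegree ≤ 5) :
    4 * s ^ 2 * aeval s p ∈ Lambda s := by
  refine ⟨0, 0, 2 * p.coeff 0, p.coeff 1, 4 * p.coeff 2, 2 * p.coeff 3, 2 * p.coeff 4,
    p.coeff 5, ?_⟩
  rw [aeval_eq_sum_range' (Nat.lt_succ_of_le hp)]
  simp only [Finset.sum_range_succ, Finset.sum_range_zero, zsmul_eq_mul]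
  push_cast
  ring

theorem eight_mul_pow_eight_mem_Lambda (s : ℝ) (a b c d e f : ℤ)
    (h : cayleyMenger ((a + s) ^ 2) ((b + s) ^ 2) ((c + s) ^ 2) ((d + s) ^ 2)
      ((e + s) ^ 2) ((f + s) ^ 2) = 0) :
    8 * s ^ 8 ∈ Lambda s := by
  set P : ℤ[X] := cayleyMenger ((C a + X) ^ 2) ((C b + X) ^ 2) ((C c + X) ^ 2)
    ((C d + X) ^ 2) ((C e + X) ^ 2) ((C f + X) ^ 2) - 2 * X ^ 6
  have hP : aeval s P = -2 * s ^ 6 := by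
    simp only [P, map_sub, map_mul, map_pow, map_ofNat, aeval_X, ← AlgHom.coe_toRingHom,
      map_cayleyMenger]
    simpa using h
  have hmem := four_mul_sq_mul_aeval_mem_Lambda s
    ((natDegree_neg P).trans_le (natDegree_cayleyMenger_shift_sub_le a b c d e f))
  rw [map_neg, hP] at hmem
  convert hmem using 1
  ring

theorem Set.encard_le_three_of_no_four_distinct {α : Type*} {S : Set α}
    (h : ∀ a ∈ S, ∀ b ∈ S, ∀ c ∈ S, ∀ d ∈ S,
      a ≠ b → a ≠ c → a ≠ d → b ≠ c → b ≠ d → c ≠ d → False) :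
    S.encard ≤ 3 := by
  by_contra! hS
  obtain ⟨T, hTS, hT⟩ := Set.exists_subset_encard_eq (k := 4) (Order.add_one_le_of_lt hS)
  have hT4 : T.ncard = 4 := by simp [Set.ncard_def, hT]
  obtain ⟨a, ha, b, hb, c, hc, d, hd, hab, hac, had, hbc, hbd, hcd⟩ :=
    (Set.three_lt_ncard (Set.finite_of_encard_eq_coe hT)).mp (by omega)
  exact h a (hTS ha) b (hTS hb) c (hTS hc) d (hTS hd) hab hac had hbc hbd hcd

/-- **Shifted Erdős–Solymosi theorem, general form.**
If `8s⁸ ∉ Λ(s)` and all pairwise distances between distinct points of `A ⊆ ℝ²`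
lie in `{n + s : n ∈ ℕ}`, then `A` has at most 3 elements. -/
theorem distance_set_shift_of_not_mem_Lambda (s : ℝ) (hs : 8 * s ^ 8 ∉ Lambda s)
    (A : Set (EuclideanSpace ℝ (Fin 2)))
    (hA : ∀ a ∈ A, ∀ a' ∈ A, a ≠ a' → ∃ n : ℕ, dist a a' = (n : ℝ) + s) :
    A.Finite ∧ A.ncard ≤ 3 := by
  refine Set.encard_le_coe_iff_finite_ncard_le.mp (Set.encard_le_three_of_no_four_distinct ?_)
  intro p₁ h₁ p₂ h₂ p₃ h₃ p₄ h₄ h₁₂ h₁₃ h₁₄ h₂₃ h₂₄ h₃₄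
  obtain ⟨a, ha⟩ := hA p₁ h₁ p₂ h₂ h₁₂
  obtain ⟨b, hb⟩ := hA p₁ h₁ p₃ h₃ h₁₃
  obtain ⟨c, hc⟩ := hA p₁ h₁ p₄ h₄ h₁₄
  obtain ⟨d, hd⟩ := hA p₂ h₂ p₃ h₃ h₂₃
  obtain ⟨e, he⟩ := hA p₂ h₂ p₄ h₄ h₂₄
  obtain ⟨f, hf⟩ := hA p₃ h₃ p₄ h₄ h₃₄
  have hplane := cayleyMenger_dist_sq_eq_zero finrank_euclideanSpace_fin.le p₁ p₂ p₃ p₄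
  rw [ha, hb, hc, hd, he, hf] at hplane
  exact hs (eight_mul_pow_eight_mem_Lambda s a b c d e f (by exact_mod_cast hplane))
end

section
/- If A ⊆ ℝ² is a set whose distance set satisfies Δ(A) ⊆ {n/2 + 1/8 : n ∈ ℕ}, then A has at most 3 elements. -/
/-!
Scaling by 8 turns the admissible distances `n/2 + 1/8` into the odd integers `4n + 1`, so it
suffices to show that no four points `p₀, …, p₃` of the plane have pairwise odd integer distances.
By polarization, twice the Gram matrix of `pᵢ - p₀` (`i = 1, 2, 3`) is an integer matrix `M` with
entries `d₀ᵢ² + d₀ⱼ² - dᵢⱼ²`. Odd squares are `1` mod `8`, so `M ≡ I + J (mod 8)` and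
`det M ≡ 4 (mod 8)`; but three vectors in the plane are dependent, so `det M = 0`.
-/

open Module Matrix

theorem Matrix.det_one_add_ones {R m : Type*} [CommRing R] [Fintype m] [DecidableEq m] :
    (1 + of fun _ _ => 1 : Matrix m m R).det = Fintype.card m + 1 := by
  have h : (of fun _ _ => 1 : Matrix m m R) =
      (replicateCol Unit (1 : m → R) * replicateRow Unit (1 : m → R) : Matrix m m R) := by
    ext i j; simp [mul_apply]
  rw [h, det_one_add_replicateCol_mul_replicateRow]
  simp [add_comm]

theorem Matrix.det_gram_eq_zero_of_finrank_lt {𝕜 F ι : Type*} [RCLike 𝕜] [NormedAddCommGroup F]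
    [InnerProductSpace 𝕜 F] [FiniteDimensional 𝕜 F] [Fintype ι] [DecidableEq ι] (v : ι → F)
    (h : finrank 𝕜 F < Fintype.card ι) : (gram 𝕜 v).det = 0 := by
  by_contra h0
  exact (linearIndependent_of_det_gram_ne_zero h0).fintype_card_le_finrank.not_gt h

theorem Int.cast_sq_zmod_eight_of_odd {m : ℤ} (hm : Odd m) : (m : ZMod 8) ^ 2 = 1 := by
  obtain ⟨k, rfl⟩ := hm
  push_cast
  generalize (k : ZMod 8) = x
  revert x
  decide

section

variable {E : Type*} [NormedAddCommGroup E] [InnerProductSpace ℝ E]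

theorem two_mul_inner_sub_sub (p q r : E) :
    2 * inner ℝ (q - p) (r - p) = dist p q ^ 2 + dist p r ^ 2 - dist q r ^ 2 := by
  rw [dist_comm p q, dist_comm p r, dist_eq_norm, dist_eq_norm, dist_eq_norm,
    ← sub_sub_sub_cancel_right q r p, norm_sub_sq_real (q - p)]
  ring

theorem two_smul_gram_sub (n : ℕ) (p : Fin (n + 1) → E) :
    (2 : ℝ) • gram ℝ (fun i => p i.succ - p 0) =
      of fun i j : Fin n => dist (p 0) (p i.succ) ^ 2 + dist (p 0) (p j.succ) ^ 2 -
        dist (p i.succ) (p j.succ) ^ 2 := by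
  ext i j
  simp [gram, two_mul_inner_sub_sub]

theorem false_of_odd_dist_fin_four [FiniteDimensional ℝ E] (hE : finrank ℝ E ≤ 2)
    (p : Fin 4 → E) (hp : ∀ i j, i ≠ j → ∃ m : ℤ, Odd m ∧ dist (p i) (p j) = m) : False := by
  choose! d hd_odd hd using hp
  let s : Fin 4 → Fin 4 → ℤ := fun i j => if i = j then 0 else d i j ^ 2
  have hs : ∀ i j, dist (p i) (p j) ^ 2 = s i j := by
    intro i j
    by_cases hij : i = j <;> simp [s, hij, hd]
  have hs8 : ∀ i j, (s i j : ZMod 8) = if i = j then 0 else 1 := by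
    intro i j
    by_cases hij : i = j <;> simp [s, hij, Int.cast_sq_zmod_eight_of_odd, hd_odd]
  let M : Matrix (Fin 3) (Fin 3) ℤ := of fun i j => s 0 i.succ + s 0 j.succ - s i.succ j.succ
  have hM_real : M.map (Int.cast : ℤ → ℝ) = (2 : ℝ) • gram ℝ (fun i => p i.succ - p 0) := by
    rw [two_smul_gram_sub]
    ext i j
    simp [M, hs]
  have hM_zmod : M.map (Int.cast : ℤ → ZMod 8) = 1 + of fun _ _ => 1 := by
    ext i j
    by_cases hij : i = j <;> simp [M, hs8, hij, (Fin.succ_ne_zero _).symm, one_apply]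
  have hdet_zero : M.det = 0 := by
    have h := Int.cast_det (R := ℝ) M
    rw [hM_real, det_smul, det_gram_eq_zero_of_finrank_lt _ (by simp; omega), mul_zero] at h
    exact_mod_cast h
  have hdet_four : (M.det : ZMod 8) = 4 := by
    rw [Int.cast_det, hM_zmod, det_one_add_ones]
    rfl
  exact absurd (hdet_zero ▸ hdet_four) (by decide)

theorem encard_le_three_of_odd_dist [FiniteDimensional ℝ E] (hE : finrank ℝ E ≤ 2) (A : Set E)
    (hA : ∀ a ∈ A, ∀ b ∈ A, a ≠ b → ∃ m : ℤ, Odd m ∧ dist a b = m) : A.encard ≤ 3 := by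
  by_contra! h
  obtain ⟨t, htA, ht⟩ := A.exists_subset_encard_eq (Order.add_one_le_of_lt h)
  have : Finite t := Set.finite_of_encard_eq_coe ht
  have e : t ≃ Fin 4 :=
    Finite.equivFinOfCardEq (by rw [Nat.card_coe_set_eq, Set.ncard_def, ht]; rfl)
  refine false_of_odd_dist_fin_four hE (fun i => e.symm i) fun i j hij => ?_
  exact hA _ (htA (e.symm i).2) _ (htA (e.symm j).2) (by simpa [Subtype.val_inj] using hij)

end

/-- If all pairwise distances between distinct points of `A ⊆ ℝ²` lie in
`{n/2 + 1/8 : n ∈ ℕ}`, then `A` has at most 3 elements. -/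
theorem distance_set_half_int_shift_eighth (A : Set (EuclideanSpace ℝ (Fin 2)))
    (hA : ∀ a ∈ A, ∀ a' ∈ A, a ≠ a' → ∃ n : ℕ, dist a a' = (n : ℝ) / 2 + 1 / 8) :
    A.Finite ∧ A.ncard ≤ 3 := by
  rw [← Set.encard_le_coe_iff_finite_ncard_le,
    ← (smul_right_injective _ (by norm_num : (8 : ℝ) ≠ 0)).injOn.encard_image]
  refine encard_le_three_of_odd_dist (by simp) _ ?_
  rintro _ ⟨a, ha, rfl⟩ _ ⟨b, hb, rfl⟩ hab
  obtain ⟨n, hn⟩ := hA a ha b hb (by rintro rfl; exact hab rfl)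
  refine ⟨2 * (2 * n) + 1, odd_two_mul_add_one _, ?_⟩
  rw [dist_smul₀, hn, Real.norm_ofNat]
  push_cast
  ring
end

section
/- Let C₃ > 0 and η₀ > 0. There exists a constant C > 0, depending only on C₃ and η₀, with the following property: if A ⊆ ℝ² is any set such that all pairwise distances of distinct points of A are ≥ η₀, and such that for all distinct a, a' ∈ A there exists k ∈ ℕ with | |a − a'| − k/2 − 1/8 | ≤ C₃/(k + 1), then for every q ≥ 1, the number of points of A in the square [−q, q]² is at most C·q. -/
/-!
Distances of at least `25 C₃` are within `1/48` of `k/2 + 1/8`. For three such distances the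
triangle defect `d₁ + d₂ - d₃` is then within `1/16` of `(k₁ + k₂ - k₃)/2 + 1/8`, where
`k₁ + k₂ ≥ k₃` by the triangle inequality, so it is at least `1/16`. Seen from a point `a` of a
`25 C₃`-separated subset `N` of the square, two further points `b, c` therefore satisfy
`|b - c| ≥ ||b - a| - |c - a|| + 1/16`, which by the law of cosines forces their arguments around
`a` to differ by `≳ 1/q`; hence `|N| = O(q)`. A maximal such `N` covers the square by balls of
radius `25 C₃`, each containing `O(1)` points of the `η₀`-separated set `A`.
-/

open Real Metric MeasureTheory Module Complex
open scoped NNReal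

theorem Set.finite_and_ncard_le_of_forall_finset {α : Type*} {s : Set α} {B : ℝ}
    (h : ∀ t : Finset α, ↑t ⊆ s → (t.card : ℝ) ≤ B) : s.Finite ∧ (s.ncard : ℝ) ≤ B := by
  have hfin : s.Finite := by
    by_contra hinf
    obtain ⟨t, hts, hcard⟩ := Set.Infinite.exists_subset_card_eq hinf (⌈B⌉₊ + 1)
    have := h t hts
    rw [hcard, Nat.cast_add_one] at this
    linarith [Nat.le_ceil B]
  refine ⟨hfin, ?_⟩
  rw [Set.ncard_eq_toFinset_card s hfin]
  exact h _ (by simp)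

theorem Finset.card_le_of_subset_closedBall_of_le_dist {E : Type*} [NormedAddCommGroup E]
    [NormedSpace ℝ E] [FiniteDimensional ℝ E] {s : Finset E} {x : E} {r δ : ℝ}
    (hr : 0 ≤ r) (hδ : 0 < δ) (hs : (s : Set E) ⊆ closedBall x r)
    (hsep : (s : Set E).Pairwise fun y z ↦ δ ≤ dist y z) :
    (s.card : ℝ) ≤ ((2 * r + δ) / δ) ^ finrank ℝ E := by
  borelize E
  set μ : Measure E := Measure.addHaar
  have hdisj : (s : Set E).PairwiseDisjoint fun y ↦ ball y (δ / 2) := by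
    intro y hy z hz hyz
    refine ball_disjoint_ball ?_
    linarith [hsep hy hz hyz]
  have hsub : (⋃ y ∈ s, ball y (δ / 2)) ⊆ ball x (r + δ / 2) :=
    Set.iUnion₂_subset fun y hy ↦ ball_subset_ball' (by linarith [mem_closedBall.1 (hs hy)])
  have hvol : (s.card : ENNReal) * μ (ball 0 (δ / 2)) ≤ μ (ball 0 (r + δ / 2)) := by
    calc (s.card : ENNReal) * μ (ball 0 (δ / 2)) = μ (⋃ y ∈ s, ball y (δ / 2)) := by
          rw [measure_biUnion_finset hdisj fun _ _ ↦ measurableSet_ball]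
          simp [Measure.addHaar_ball_center]
      _ ≤ μ (ball x (r + δ / 2)) := measure_mono hsub
      _ = μ (ball 0 (r + δ / 2)) := Measure.addHaar_ball_center μ x _
  have hmass : (s.card : ℝ) * (δ / 2) ^ finrank ℝ E ≤ (r + δ / 2) ^ finrank ℝ E := by
    rw [Measure.addHaar_ball_of_pos μ _ (half_pos hδ),
      Measure.addHaar_ball_of_pos μ _ (r := r + δ / 2) (by positivity), ← mul_assoc,
      ENNReal.mul_le_mul_iff_left (measure_ball_pos μ 0 one_pos).ne' measure_ball_lt_top.ne,
      ← ENNReal.ofReal_natCast, ← ENNReal.ofReal_mul (by positivity),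
      ENNReal.ofReal_le_ofReal_iff (by positivity)] at hvol
    exact hvol
  rw [div_pow, le_div_iff₀ (by positivity)]
  calc (s.card : ℝ) * δ ^ finrank ℝ E = 2 ^ finrank ℝ E * (s.card * (δ / 2) ^ finrank ℝ E) := by
        rw [div_pow]; field_simp
    _ ≤ 2 ^ finrank ℝ E * (r + δ / 2) ^ finrank ℝ E := by gcongr
    _ = (2 * r + δ) ^ finrank ℝ E := by rw [← mul_pow]; ring

theorem Finset.card_le_card_mul_of_isCover {X : Type*} [PseudoMetricSpace X] {t N : Finset X}
    {ρ : ℝ≥0} {K : ℝ} (hN : IsCover ρ (t : Set X) (N : Set X))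
    (hK : ∀ y ∈ N, ((t.filter fun x ↦ dist x y ≤ ρ).card : ℝ) ≤ K) :
    (t.card : ℝ) ≤ N.card * K := by
  classical
  have hsub : t ⊆ N.biUnion fun y ↦ t.filter fun x ↦ dist x y ≤ ρ := by
    intro x hx
    obtain ⟨y, hy, hxy⟩ := hN (Finset.mem_coe.2 hx)
    exact Finset.mem_biUnion.2 ⟨y, hy, Finset.mem_filter.2 ⟨hx, by simpa [edist_dist] using hxy⟩⟩
  calc (t.card : ℝ) ≤ ∑ y ∈ N, ((t.filter fun x ↦ dist x y ≤ ρ).card : ℝ) := by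
        exact_mod_cast (Finset.card_le_card hsub).trans Finset.card_biUnion_le
    _ ≤ N.card * K := by simpa using Finset.sum_le_card_nsmul N _ K hK

theorem Complex.norm_sub_sq_le_add_arg_sub_sq (z w : ℂ) :
    ‖z - w‖ ^ 2 ≤ (‖z‖ - ‖w‖) ^ 2 + ‖z‖ * ‖w‖ * (arg z - arg w) ^ 2 := by
  have hcos := Real.one_sub_sq_div_two_le_cos (x := arg z - arg w)
  calc ‖z - w‖ ^ 2
      = (‖z‖ * Real.cos (arg z) - ‖w‖ * Real.cos (arg w)) ^ 2
        + (‖z‖ * Real.sin (arg z) - ‖w‖ * Real.sin (arg w)) ^ 2 := by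
        rw [norm_mul_cos_arg, norm_mul_cos_arg, norm_mul_sin_arg, norm_mul_sin_arg,
          Complex.sq_norm, normSq_apply, sub_re, sub_im]
        ring
    _ = (‖z‖ - ‖w‖) ^ 2 + 2 * (‖z‖ * ‖w‖) * (1 - Real.cos (arg z - arg w)) := by
        rw [Real.cos_sub]
        linear_combination ‖z‖ ^ 2 * Real.sin_sq_add_cos_sq (arg z)
          + ‖w‖ ^ 2 * Real.sin_sq_add_cos_sq (arg w)
    _ ≤ (‖z‖ - ‖w‖) ^ 2 + 2 * (‖z‖ * ‖w‖) * ((arg z - arg w) ^ 2 / 2) := by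
        gcongr; linarith
    _ = _ := by ring

theorem Complex.le_mul_abs_arg_sub {z w : ℂ} {ε M : ℝ} (hε : 0 ≤ ε) (hz : ‖z‖ ≤ M) (hw : ‖w‖ ≤ M)
    (h : |‖z‖ - ‖w‖| + ε ≤ ‖z - w‖) : ε ≤ M * |arg z - arg w| := by
  have hM : 0 ≤ M := (norm_nonneg z).trans hz
  have key : ε ^ 2 ≤ (M * |arg z - arg w|) ^ 2 :=
    calc ε ^ 2 ≤ ‖z - w‖ ^ 2 - (‖z‖ - ‖w‖) ^ 2 := by
          nlinarith [abs_nonneg (‖z‖ - ‖w‖), sq_abs (‖z‖ - ‖w‖)]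
      _ ≤ ‖z‖ * ‖w‖ * (arg z - arg w) ^ 2 := by linarith [norm_sub_sq_le_add_arg_sub_sq z w]
      _ ≤ M * M * (arg z - arg w) ^ 2 := by gcongr
      _ = (M * |arg z - arg w|) ^ 2 := by rw [mul_pow, sq_abs]; ring
  exact abs_le_of_sq_le_sq' key (by positivity) |>.2

theorem Complex.card_le_of_abs_norm_sub_norm_add_le {s : Finset ℂ} {ε M : ℝ} (hε : 0 < ε)
    (hM : 0 < M) (hs : ∀ z ∈ s, ‖z‖ ≤ M)
    (hsep : (s : Set ℂ).Pairwise fun z w ↦ |‖z‖ - ‖w‖| + ε ≤ ‖z - w‖) :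
    (s.card : ℝ) ≤ 2 * π * M / ε + 1 := by
  have hδ : 0 < ε / M := div_pos hε hM
  have harg : (s : Set ℂ).Pairwise fun z w ↦ ε / M ≤ dist (arg z) (arg w) := by
    intro z hz w hw hzw
    rw [div_le_iff₀' hM, Real.dist_eq]
    exact le_mul_abs_arg_sub hε.le (hs z hz) (hs w hw) (hsep hz hw hzw)
  have hinj : Set.InjOn arg s := fun z hz w hw hzw ↦ by
    by_contra hne
    have : ε / M ≤ dist (arg z) (arg w) := harg hz hw hne
    rw [hzw, dist_self] at this
    linarith
  have hcard := Finset.card_le_of_subset_closedBall_of_le_dist (s := s.image arg) (x := 0)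
    pi_pos.le hδ (by simpa [Set.subset_def, Real.dist_eq] using fun z _ ↦ abs_arg_le_pi z)
    (by rw [Finset.coe_image, hinj.pairwise_image]; exact harg)
  rw [Finset.card_image_of_injOn hinj, finrank_self, pow_one] at hcard
  convert hcard using 1
  field_simp

def IsQuantized (ε d : ℝ) : Prop := ∃ k : ℕ, |d - k / 2 - 1 / 8| ≤ ε

theorem isQuantized_of_le_div {C ε d : ℝ} (hC : 0 ≤ C) (hε : 0 < ε)
    (h : ∃ k : ℕ, |d - k / 2 - 1 / 8| ≤ C / (k + 1)) (hd : C + C / (2 * ε) ≤ d) :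
    IsQuantized ε d := by
  obtain ⟨k, hk⟩ := h
  refine ⟨k, hk.trans ?_⟩
  have hk1 : (0 : ℝ) < k + 1 := by positivity
  have hCk : C / (k + 1) ≤ C := div_le_self hC (by linarith)
  have hlarge : C / ε ≤ k + 1 := by
    have : C / (2 * ε) = C / ε / 2 := by ring
    linarith [(abs_le.1 hk).2]
  rw [div_le_iff₀ hε] at hlarge
  rw [div_le_iff₀ hk1]
  linarith

theorem IsQuantized.le_add_sub_of_le_add {ε d₁ d₂ d₃ : ℝ} (hε : ε < 1 / 8)
    (h₁ : IsQuantized ε d₁) (h₂ : IsQuantized ε d₂) (h₃ : IsQuantized ε d₃) (h : d₃ ≤ d₁ + d₂) :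
    1 / 8 - 3 * ε ≤ d₁ + d₂ - d₃ := by
  obtain ⟨k₁, hk₁⟩ := h₁
  obtain ⟨k₂, hk₂⟩ := h₂
  obtain ⟨k₃, hk₃⟩ := h₃
  rw [abs_le] at hk₁ hk₂ hk₃
  rcases le_or_gt k₃ (k₁ + k₂) with hk | hk
  · have : (k₃ : ℝ) ≤ k₁ + k₂ := by exact_mod_cast hk
    linarith
  · have : (k₁ : ℝ) + k₂ + 1 ≤ k₃ := by exact_mod_cast hk
    linarith

theorem abs_dist_sub_dist_add_le_of_isQuantized {X : Type*} [PseudoMetricSpace X] {x y z : X}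
    {ε : ℝ} (hε : ε < 1 / 8) (hxy : IsQuantized ε (dist x y)) (hxz : IsQuantized ε (dist x z))
    (hyz : IsQuantized ε (dist y z)) :
    |dist x y - dist x z| + (1 / 8 - 3 * ε) ≤ dist y z := by
  have h₁ := hxy.le_add_sub_of_le_add hε hyz hxz (dist_triangle x y z)
  have h₂ := hxz.le_add_sub_of_le_add hε (dist_comm y z ▸ hyz) hxy (dist_triangle x z y)
  rw [dist_comm z y] at h₂
  rw [← le_sub_iff_add_le, abs_sub_le_iff]
  constructor <;> linarith

theorem Complex.card_le_of_isQuantized {N : Finset ℂ} {ε Q : ℝ} (hε : ε < 1 / 24) (hQ : 0 < Q)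
    (hN : (N : Set ℂ) ⊆ closedBall 0 Q)
    (hquant : (N : Set ℂ).Pairwise fun z w ↦ IsQuantized ε (dist z w)) :
    (N.card : ℝ) ≤ 4 * π * Q / (1 / 8 - 3 * ε) + 2 := by
  have hgap : 0 < 1 / 8 - 3 * ε := by linarith
  rcases N.eq_empty_or_nonempty with rfl | ⟨a, ha⟩
  · simp only [Finset.card_empty, CharP.cast_eq_zero]
    positivity
  have hnorm : ∀ z ∈ N, ‖z‖ ≤ Q := fun z hz ↦ by simpa using hN hz
  set s := (N.erase a).image (· - a)
  have hs : ∀ z ∈ s, ‖z‖ ≤ 2 * Q := by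
    simp only [s, Finset.mem_image, Finset.mem_erase]
    rintro _ ⟨b, ⟨-, hb⟩, rfl⟩
    linarith [norm_sub_le b a, hnorm b hb, hnorm a ha]
  have hsep : (s : Set ℂ).Pairwise fun z w ↦ |‖z‖ - ‖w‖| + (1 / 8 - 3 * ε) ≤ ‖z - w‖ := by
    rw [Finset.coe_image, (sub_left_injective.injOn).pairwise_image]
    intro b hb c hc hbc
    simp only [Finset.coe_erase, Set.mem_sdiff, Finset.mem_coe, Set.mem_singleton_iff] at hb hc
    simp only [Function.onFun, sub_sub_sub_cancel_right, ← dist_eq_norm, dist_comm _ a]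
    exact abs_dist_sub_dist_add_le_of_isQuantized (by linarith) (hquant ha hb.1 (Ne.symm hb.2))
      (hquant ha hc.1 (Ne.symm hc.2)) (hquant hb.1 hc.1 hbc)
  have hcard := card_le_of_abs_norm_sub_norm_add_le hgap (by linarith) hs hsep
  rw [Finset.card_image_of_injective _ sub_left_injective] at hcard
  calc (N.card : ℝ) = (N.erase a).card + 1 := by exact_mod_cast (N.card_erase_add_one ha).symm
    _ ≤ 2 * π * (2 * Q) / (1 / 8 - 3 * ε) + 1 + 1 := by gcongr
    _ = 4 * π * Q / (1 / 8 - 3 * ε) + 2 := by ring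

theorem Complex.card_le_of_forall_quantized_dist {t : Finset ℂ} {C η Q : ℝ} (hC : 0 ≤ C)
    (hη : 0 < η) (hQ : 0 < Q) (ht : (t : Set ℂ) ⊆ closedBall 0 Q)
    (hsep : (t : Set ℂ).Pairwise fun z w ↦ η ≤ dist z w)
    (hquant : (t : Set ℂ).Pairwise fun z w ↦
      ∃ k : ℕ, |dist z w - k / 2 - 1 / 8| ≤ C / (k + 1)) :
    (t.card : ℝ) ≤ ((50 * C + η) / η) ^ 2 * (64 * π * Q + 2) := by
  set ρ : ℝ≥0 := ⟨25 * C, by positivity⟩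
  have hρ : (ρ : ℝ) = 25 * C := rfl
  set N := maximalSeparatedSet ρ (t : Set ℂ)
  have hNt : N ⊆ t := maximalSeparatedSet_subset
  have hNfin : N.Finite := t.finite_toSet.subset hNt
  have hcover : IsCover ρ (t : Set ℂ) (hNfin.toFinset : Set ℂ) := by
    rw [hNfin.coe_toFinset]
    exact isCover_maximalSeparatedSet
      ((packingNumber_le_encard_self _).trans_lt t.finite_toSet.encard_lt_top).ne
  have hball : ∀ y ∈ hNfin.toFinset,
      ((t.filter fun x ↦ dist x y ≤ ρ).card : ℝ) ≤ ((50 * C + η) / η) ^ 2 := fun y _ ↦ by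
    have := Finset.card_le_of_subset_closedBall_of_le_dist (s := t.filter fun x ↦ dist x y ≤ ρ)
      (x := y) ρ.coe_nonneg hη (fun x hx ↦ mem_closedBall.2 (Finset.mem_filter.1 hx).2)
      (hsep.mono (Finset.coe_subset.2 (Finset.filter_subset _ _)))
    rw [Complex.finrank_real_complex] at this
    convert this using 3
    rw [hρ]
    ring
  have hnet : (hNfin.toFinset.card : ℝ) ≤ 64 * π * Q + 2 := by
    have hquantN :
        (hNfin.toFinset : Set ℂ).Pairwise fun z w ↦ IsQuantized (1 / 48) (dist z w) := by
      rw [hNfin.coe_toFinset]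
      intro z hz w hw hzw
      have hfar : ρ < edist z w := isSeparated_maximalSeparatedSet hz hw hzw
      rw [edist_nndist, ENNReal.coe_lt_coe, ← NNReal.coe_lt_coe, coe_nndist] at hfar
      exact isQuantized_of_le_div hC (by norm_num) (hquant (hNt hz) (hNt hw) hzw)
        (by rw [hρ] at hfar; linarith [show C / (2 * (1 / 48)) = 24 * C by ring])
    convert card_le_of_isQuantized (by norm_num) hQ
      (by rw [hNfin.coe_toFinset]; exact hNt.trans ht) hquantN using 2
    ring
  calc (t.card : ℝ) ≤ hNfin.toFinset.card * ((50 * C + η) / η) ^ 2 :=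
        Finset.card_le_card_mul_of_isCover hcover hball
    _ ≤ (64 * π * Q + 2) * ((50 * C + η) / η) ^ 2 := by gcongr
    _ = _ := by ring

/-- **Linear growth of quantized separated sets in the plane.**
Given `C₃ > 0` and `η₀ > 0`, there is `C > 0` such that every `η₀`-separated
set `A ⊆ ℝ²` whose pairwise distances satisfy `||a − a'| − k/2 − 1/8| ≤ C₃/(k+1)`
for some `k ∈ ℕ` has at most `C·q` points in the square `[−q, q]²` for every
`q ≥ 1`. -/
theorem quantized_set_linear_growth (C₃ η₀ : ℝ) (hC₃ : 0 < C₃) (hη₀ : 0 < η₀) :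
    ∃ C > (0 : ℝ),
      ∀ A : Set (EuclideanSpace ℝ (Fin 2)),
        (∀ a ∈ A, ∀ a' ∈ A, a ≠ a' → η₀ ≤ dist a a') →
        (∀ a ∈ A, ∀ a' ∈ A, a ≠ a' →
          ∃ k : ℕ, |dist a a' - (k : ℝ) / 2 - 1 / 8| ≤ C₃ / ((k : ℝ) + 1)) →
        ∀ q : ℝ, 1 ≤ q →
          (A ∩ {x | ∀ i, |x i| ≤ q}).Finite ∧
          ((A ∩ {x | ∀ i, |x i| ≤ q}).ncard : ℝ) ≤ C * q := by
  set K := ((50 * C₃ + η₀) / η₀) ^ 2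
  refine ⟨K * (128 * π + 2), by positivity, fun A hsep hquant q hq ↦ ?_⟩
  refine Set.finite_and_ncard_le_of_forall_finset fun t ht ↦ ?_
  set e := Complex.orthonormalBasisOneI.repr.symm
  have hinj : Set.InjOn e t := e.injective.injOn
  have hball : ((t.image e : Finset ℂ) : Set ℂ) ⊆ closedBall 0 (2 * q) := by
    rw [Finset.coe_image]
    rintro _ ⟨x, hx, rfl⟩
    rw [mem_closedBall_zero_iff]
    refine (norm_le_abs_re_add_abs_im _).trans ?_
    simpa [e, two_mul] using add_le_add ((ht hx).2 0) ((ht hx).2 1)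
  have hcard := Complex.card_le_of_forall_quantized_dist hC₃.le hη₀ (by linarith) hball
    (by rw [Finset.coe_image, hinj.pairwise_image]
        exact fun x hx y hy hxy ↦ by
          simpa only [Function.onFun, e.dist_map] using hsep x (ht hx).1 y (ht hy).1 hxy)
    (by rw [Finset.coe_image, hinj.pairwise_image]
        exact fun x hx y hy hxy ↦ by
          simpa only [Function.onFun, e.dist_map] using hquant x (ht hx).1 y (ht hy).1 hxy)
  rw [Finset.card_image_of_injective _ e.injective] at hcard
  calc (t.card : ℝ) ≤ K * (64 * π * (2 * q) + 2) := hcard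
    _ ≤ K * (128 * π + 2) * q := by nlinarith [pi_pos, sq_nonneg ((50 * C₃ + η₀) / η₀)]
end
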